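/- Let P be a polynomial function on ℝᴺ and f₁, …, f_p affine functions on ℝᴺ. Suppose there exist x₀ ∈ ℝᴺ and an open neighbourhood V₀ of x₀ such that for all x, x̃ ∈ V₀, if fⱼ(x) = fⱼ(x̃) for all j = 1, …, p, then P(x) = P(x̃). Then the same implication holds for all x, x̃ ∈ ℝᴺ: fⱼ(x) = fⱼ(x̃) for all j implies P(x) = P(x̃). Equivalently, P factors through the affine map (f₁, …, f_p) : ℝᴺ → ℝᵖ. -/
import Mathlib

private lemma evalLine {N : ℕ} (P : MvPolynomial (Fin N) ℝ) (b d : Fin N → ℝ) (t : ℝ) :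
    Polynomial.eval t (MvPolynomial.aeval
        (fun i => Polynomial.C (b i) + Polynomial.C (d i) * Polynomial.X) P)
      = MvPolynomial.eval (fun i => b i + d i * t) P := by
  induction P using MvPolynomial.induction_on with
  | C r => simp
  | add p q hp hq => simp [hp, hq]
  | mul_X p n h => simp [h]

private lemma polyZero (q : Polynomial ℝ) (ε : ℝ) (hε : 0 < ε)
    (h : ∀ t : ℝ, |t| < ε → q.eval t = 0) : q = 0 := by
  apply Polynomial.eq_zero_of_infinite_isRoot
  apply Set.Infinite.mono (s := Set.Ioo (-ε) ε)
  · intro t ht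
    exact h t (abs_lt.mpr ⟨ht.1, ht.2⟩)
  · exact Set.Ioo_infinite (by linarith)

private lemma lineConst {N : ℕ} (P : MvPolynomial (Fin N) ℝ) (b d : Fin N → ℝ) (ε : ℝ)
    (hε : 0 < ε)
    (h : ∀ t : ℝ, |t| < ε →
      MvPolynomial.eval (fun i => b i + d i * t) P = MvPolynomial.eval b P) :
    ∀ t : ℝ, MvPolynomial.eval (fun i => b i + d i * t) P = MvPolynomial.eval b P := by
  intro t
  have hq : (MvPolynomial.aeval
      (fun i => Polynomial.C (b i) + Polynomial.C (d i) * Polynomial.X) P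
      - Polynomial.C (MvPolynomial.eval b P)) = 0 := by
    apply polyZero _ ε hε
    intro s hs
    simp [evalLine, h s hs]
  have := congrArg (Polynomial.eval t) hq
  simpa [evalLine, sub_eq_zero] using this

/-- A polynomial `P` on `ℝᴺ` which, on some open neighbourhood `V₀` of a point
`x₀`, only depends on the values of finitely many affine functions `fⱼ = aⱼ + cⱼ`,
only depends on these values globally. -/
theorem stmt15 (N p : ℕ) (P : MvPolynomial (Fin N) ℝ)
    (a : Fin p → ((Fin N → ℝ) →ₗ[ℝ] ℝ)) (c : Fin p → ℝ)
    (x₀ : Fin N → ℝ) (V₀ : Set (Fin N → ℝ)) (hV₀ : IsOpen V₀) (hx₀ : x₀ ∈ V₀)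
    (hloc : ∀ x ∈ V₀, ∀ y ∈ V₀,
      (∀ j : Fin p, a j x + c j = a j y + c j) →
      MvPolynomial.eval x P = MvPolynomial.eval y P) :
    ∀ x y : Fin N → ℝ,
      (∀ j : Fin p, a j x + c j = a j y + c j) →
      MvPolynomial.eval x P = MvPolynomial.eval y P := by
  intro x y hxy
  set v : Fin N → ℝ := x - y with hv_def
  have hv : ∀ j, a j v = 0 := by
    intro j
    have := hxy j
    simp only [hv_def, map_sub]
    linarith
  -- Step A: constancy along `v` from any base point in `V₀`.
  have stepA : ∀ b : Fin N → ℝ, b ∈ V₀ →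
      ∀ t : ℝ, MvPolynomial.eval (fun i => b i + v i * t) P = MvPolynomial.eval b P := by
    intro b hb
    -- find ε such that b + t • v ∈ V₀ for |t| < ε
    have hcont : Continuous (fun t : ℝ => b + t • v) := by
      continuity
    have hopen : IsOpen {t : ℝ | b + t • v ∈ V₀} := hV₀.preimage hcont
    have h0 : (0 : ℝ) ∈ {t : ℝ | b + t • v ∈ V₀} := by simp [hb]
    obtain ⟨ε, hε, hball⟩ := Metric.isOpen_iff.mp hopen 0 h0
    apply lineConst P b v ε hε
    intro t ht
    have htmem : b + t • v ∈ V₀ := by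
      apply hball
      simpa [Real.dist_eq] using ht
    have heq : (fun i => b i + v i * t) = b + t • v := by
      funext i; simp [mul_comm]
    rw [heq]
    exact hloc _ htmem _ hb (fun j => by simp [map_add, map_smul, hv j])
  -- Step B: move the base point from x₀ to y along u = y - x₀.
  set u : Fin N → ℝ := y - x₀ with hu_def
  have hcont : Continuous (fun s : ℝ => x₀ + s • u) := by continuity
  have hopen : IsOpen {s : ℝ | x₀ + s • u ∈ V₀} := hV₀.preimage hcont
  have h0 : (0 : ℝ) ∈ {s : ℝ | x₀ + s • u ∈ V₀} := by simp [hx₀]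
  obtain ⟨ε, hε, hball⟩ := Metric.isOpen_iff.mp hopen 0 h0
  -- the difference polynomial in s
  have hq : (MvPolynomial.aeval
        (fun i => Polynomial.C (x₀ i + v i) + Polynomial.C (u i) * Polynomial.X) P
      - MvPolynomial.aeval
        (fun i => Polynomial.C (x₀ i) + Polynomial.C (u i) * Polynomial.X) P) = 0 := by
    apply polyZero _ ε hε
    intro s hs
    have hsmem : x₀ + s • u ∈ V₀ := by
      apply hball
      simpa [Real.dist_eq] using hs
    have h1 := stepA _ hsmem 1
    have heqb : (fun i => (x₀ + s • u) i + v i * 1) = fun i => x₀ i + v i + u i * s := by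
      funext i; simp [mul_comm]; ring
    have heqb2 : (x₀ + s • u) = fun i => x₀ i + u i * s := by
      funext i; simp [mul_comm]
    rw [heqb, heqb2] at h1
    have e1 := evalLine P (fun i => x₀ i + v i) u s
    have e2 := evalLine P x₀ u s
    simp only [Polynomial.eval_sub, e1, e2, sub_eq_zero]
    exact h1
  have := congrArg (Polynomial.eval 1) hq
  have e1 := evalLine P (fun i => x₀ i + v i) u 1
  have e2 := evalLine P x₀ u 1
  simp only [Polynomial.eval_sub, e1, e2, Polynomial.eval_zero, sub_eq_zero] at this
  have hx' : (fun i => x₀ i + v i + u i * 1) = x := by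
    funext i; simp [hv_def, hu_def]; ring
  have hy' : (fun i => x₀ i + u i * 1) = y := by
    funext i; simp [hu_def]
  rwa [hx', hy'] at this
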